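/- arXiv:2210.16156 — 2 statements merged into one kernel-verified Lean document; each statement's English description precedes it below -/
import Mathlib

section
/- (Main theorem, linear CKA subset-translation limit) Let X = {x₁,...,xₙ} ⊂ ℝ^p be centered with XXᵀ ≠ 0, S a nonempty proper subset of indices with ρ = |S|/n, v a unit vector, and for c ≥ 0 let Y_c be the centered version of the set obtained by translating points outside S by cv. Then lim_{c→∞} CKA_lin(X, Y_c) = Γ(ρ) · ‖x̄_S‖² / ((1/n)Σᵢ‖xᵢ‖²) · √PR(X), where Γ(ρ) = ρ/(1−ρ), x̄_S is the mean of {xᵢ : i ∈ S}, and PR(X) = (Σλⱼ)²/(Σλⱼ²) is the participation ratio of the eigenvalues of the covariance (1/n)XᵀX. -/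
open Finset Matrix Filter

set_option maxHeartbeats 1000000

lemma herm_trace_eq {m : Type*} [Fintype m] [DecidableEq m] (A : Matrix m m ℝ)
    (hA : A.IsHermitian) : A.trace = ∑ i, hA.eigenvalues i := by
  set U := (hA.eigenvectorUnitary : Matrix m m ℝ) with hUdef
  have h1 : star U * U = 1 := Unitary.coe_star_mul_self _
  calc A.trace = (U * diagonal (RCLike.ofReal ∘ hA.eigenvalues) * star U).trace := by
        conv_lhs => rw [hA.spectral_theorem]
        rfl
    _ = ((star U * U) * diagonal (RCLike.ofReal ∘ hA.eigenvalues)).trace := by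
        rw [trace_mul_comm, ← mul_assoc]
    _ = ∑ i, hA.eigenvalues i := by rw [h1, one_mul]; simp [trace_diagonal]

lemma herm_trace_sq_eq {m : Type*} [Fintype m] [DecidableEq m] (A : Matrix m m ℝ)
    (hA : A.IsHermitian) : (A * A).trace = ∑ i, hA.eigenvalues i ^ 2 := by
  set U := (hA.eigenvectorUnitary : Matrix m m ℝ) with hUdef
  set D := diagonal (RCLike.ofReal ∘ hA.eigenvalues : m → ℝ) with hDdef
  have h1 : star U * U = 1 := Unitary.coe_star_mul_self _
  have h2 : A * A = U * (D * D) * star U := by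
    rw [hA.spectral_theorem]
    calc U * D * star U * (U * D * star U) = U * (D * ((star U * U) * D)) * star U := by
          noncomm_ring
      _ = U * (D * D) * star U := by rw [h1, one_mul]
  rw [h2, trace_mul_comm, ← mul_assoc, h1, one_mul, hDdef, diagonal_mul_diagonal,
    trace_diagonal]
  simp [sq]

theorem cka_subset_translation_limit (n p : ℕ) (hn : 0 < n)
    (x : Fin n → EuclideanSpace ℝ (Fin p)) (hcent : ∑ i, x i = 0)
    (hX : ∃ i, x i ≠ 0)
    (S : Finset (Fin n)) (hS : S.Nonempty) (hSne : S ≠ Finset.univ)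
    (v : EuclideanSpace ℝ (Fin p)) (hv : ‖v‖ = 1)
    (y : ℝ → Fin n → EuclideanSpace ℝ (Fin p))
    (hy : ∀ c i, y c i = if i ∈ S then x i - ((c * ((n : ℝ) - S.card)) / n) • v
        else x i + ((c * S.card) / n) • v)
    (A : Matrix (Fin p) (Fin p) ℝ)
    (hAdef : ∀ j k, A j k = (n : ℝ)⁻¹ * ∑ i, x i j * x i k)
    (hA : A.IsHermitian)
    (hdenX : ∑ i, ∑ j, (inner ℝ (x i) (x j) : ℝ) ^ 2 ≠ 0)
    (hdenY : ∀ᶠ c in Filter.atTop, ∑ i, ∑ j, (inner ℝ (y c i) (y c j) : ℝ) ^ 2 ≠ 0) :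
    Filter.Tendsto
      (fun c : ℝ =>
        (∑ i, ∑ j, (inner ℝ (x i) (x j) : ℝ) * (inner ℝ (y c i) (y c j) : ℝ)) /
          Real.sqrt ((∑ i, ∑ j, (inner ℝ (x i) (x j) : ℝ) ^ 2) *
            (∑ i, ∑ j, (inner ℝ (y c i) (y c j) : ℝ) ^ 2)))
      Filter.atTop
      (nhds ((((S.card : ℝ) / n) / (1 - (S.card : ℝ) / n)) *
        ‖(S.card : ℝ)⁻¹ • ∑ i ∈ S, x i‖ ^ 2 / ((n : ℝ)⁻¹ * ∑ i, ‖x i‖ ^ 2) *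
        Real.sqrt ((∑ j, hA.eigenvalues j) ^ 2 / (∑ j, (hA.eigenvalues j) ^ 2)))) := by
  classical
  have hn0 : (0 : ℝ) < n := by exact_mod_cast hn
  set s : ℝ := (S.card : ℝ) with hsdef
  have hs0 : 0 < s := by
    have := Finset.card_pos.mpr hS
    rw [hsdef]
    exact_mod_cast this
  have hsn : s < n := by
    have h1 : S.card < Fintype.card (Fin n) := (Finset.card_lt_iff_ne_univ _).2 hSne
    rw [Fintype.card_fin] at h1
    rw [hsdef]
    exact_mod_cast h1
  -- the weights
  set w : Fin n → ℝ := fun i => if i ∈ S then -(((n : ℝ) - s) / n) else s / n with hwdef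
  have hwy : ∀ (c : ℝ) i, y c i = x i + (c * w i) • v := by
    intro c i
    rw [hy]
    by_cases hi : i ∈ S
    · rw [if_pos hi, hwdef]
      simp only [if_pos hi]
      rw [sub_eq_add_neg, ← neg_smul]
      congr 1
      ring
    · rw [if_neg hi, hwdef]
      simp only [if_neg hi]
      congr 1
      ring
  have hv1 : (inner ℝ v v : ℝ) = 1 := by
    rw [real_inner_self_eq_norm_sq, hv]; norm_num
  have hinner : ∀ (c : ℝ) i j, (inner ℝ (y c i) (y c j) : ℝ) =
      (inner ℝ (x i) (x j) : ℝ) +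
        c * (w j * (inner ℝ (x i) v : ℝ) + w i * (inner ℝ (x j) v : ℝ)) +
        c ^ 2 * (w i * w j) := by
    intro c i j
    rw [hwy, hwy]
    simp only [inner_add_left, inner_add_right, real_inner_smul_left, real_inner_smul_right,
      hv1, real_inner_comm v (x j)]
    ring
  -- coefficients
  set A0 := ∑ i, ∑ j, (inner ℝ (x i) (x j) : ℝ) ^ 2 with hA0def
  set A1 := ∑ i, ∑ j, (inner ℝ (x i) (x j) : ℝ) *
      (w j * (inner ℝ (x i) v : ℝ) + w i * (inner ℝ (x j) v : ℝ)) with hA1def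
  set A2 := ∑ i, ∑ j, (inner ℝ (x i) (x j) : ℝ) * (w i * w j) with hA2def
  set B1 := ∑ i, ∑ j, (2 * (inner ℝ (x i) (x j) : ℝ) *
      (w j * (inner ℝ (x i) v : ℝ) + w i * (inner ℝ (x j) v : ℝ))) with hB1def
  set B2 := ∑ i, ∑ j, ((w j * (inner ℝ (x i) v : ℝ) + w i * (inner ℝ (x j) v : ℝ)) ^ 2 +
      2 * (inner ℝ (x i) (x j) : ℝ) * (w i * w j)) with hB2def
  set B3 := ∑ i, ∑ j, (2 * (w j * (inner ℝ (x i) v : ℝ) + w i * (inner ℝ (x j) v : ℝ)) *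
      (w i * w j)) with hB3def
  set B4 := ∑ i, ∑ j, (w i * w j) ^ 2 with hB4def
  have hN : ∀ c : ℝ, (∑ i, ∑ j, (inner ℝ (x i) (x j) : ℝ) * (inner ℝ (y c i) (y c j) : ℝ))
      = A0 + A1 * c + A2 * c ^ 2 := by
    intro c
    have e : ∀ i j : Fin n, (inner ℝ (x i) (x j) : ℝ) * (inner ℝ (y c i) (y c j) : ℝ)
        = (inner ℝ (x i) (x j) : ℝ) ^ 2 +
            ((inner ℝ (x i) (x j) : ℝ) *
              (w j * (inner ℝ (x i) v : ℝ) + w i * (inner ℝ (x j) v : ℝ))) * c +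
            ((inner ℝ (x i) (x j) : ℝ) * (w i * w j)) * c ^ 2 := by
      intro i j; rw [hinner]; ring
    simp only [e, Finset.sum_add_distrib, ← Finset.sum_mul]
    rfl
  have hP : ∀ c : ℝ, (∑ i, ∑ j, (inner ℝ (y c i) (y c j) : ℝ) ^ 2)
      = A0 + B1 * c + B2 * c ^ 2 + B3 * c ^ 3 + B4 * c ^ 4 := by
    intro c
    have e : ∀ i j : Fin n, (inner ℝ (y c i) (y c j) : ℝ) ^ 2
        = (inner ℝ (x i) (x j) : ℝ) ^ 2 +
            (2 * (inner ℝ (x i) (x j) : ℝ) *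
              (w j * (inner ℝ (x i) v : ℝ) + w i * (inner ℝ (x j) v : ℝ))) * c +
            ((w j * (inner ℝ (x i) v : ℝ) + w i * (inner ℝ (x j) v : ℝ)) ^ 2 +
              2 * (inner ℝ (x i) (x j) : ℝ) * (w i * w j)) * c ^ 2 +
            (2 * (w j * (inner ℝ (x i) v : ℝ) + w i * (inner ℝ (x j) v : ℝ)) * (w i * w j)) * c ^ 3 +
            ((w i * w j) ^ 2) * c ^ 4 := by
      intro i j; rw [hinner]; ring
    simp only [e, Finset.sum_add_distrib, ← Finset.sum_mul]
    have hB2' : B2 = (∑ i, ∑ j, (w j * (inner ℝ (x i) v : ℝ) + w i * (inner ℝ (x j) v : ℝ)) ^ 2)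
        + ∑ i, ∑ j, 2 * (inner ℝ (x i) (x j) : ℝ) * (w i * w j) := by
      rw [hB2def]
      simp [Finset.sum_add_distrib]
    rw [hA0def, hB1def, hB2', hB3def, hB4def, add_mul]
  have hA0nonneg : 0 ≤ A0 :=
    Finset.sum_nonneg fun i _ => Finset.sum_nonneg fun j _ => sq_nonneg _
  have hA0pos : 0 < A0 := lt_of_le_of_ne hA0nonneg (Ne.symm hdenX)
  -- value of A2
  set z := ∑ i ∈ S, x i with hzdef
  have hcompl : ∑ i ∈ Sᶜ, x i = -z := by
    have h := Finset.sum_add_sum_compl S x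
    rw [hcent] at h
    exact eq_neg_of_add_eq_zero_right h
  have hsmulsum : ∑ i, w i • x i = -z := by
    rw [← Finset.sum_add_sum_compl S]
    have h1 : ∑ i ∈ S, w i • x i = (-(((n : ℝ) - s) / n)) • z := by
      rw [hzdef, Finset.smul_sum]
      refine Finset.sum_congr rfl fun i hi => ?_
      rw [hwdef]; simp [hi]
    have h2 : ∑ i ∈ Sᶜ, w i • x i = (s / n) • (-z) := by
      rw [← hcompl, Finset.smul_sum]
      refine Finset.sum_congr rfl fun i hi => ?_
      rw [hwdef]; simp [Finset.mem_compl.1 hi]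
    rw [h1, h2, smul_neg, ← neg_smul, ← add_smul]
    have : -(((n : ℝ) - s) / n) + -(s / n) = -1 := by field_simp; ring
    rw [this, neg_one_smul]
  have hA2val : A2 = ‖z‖ ^ 2 := by
    have h0 : A2 = (inner ℝ (∑ i, w i • x i) (∑ j, w j • x j) : ℝ) := by
      rw [sum_inner]
      simp only [inner_sum, real_inner_smul_left, real_inner_smul_right]
      rw [hA2def]
      exact Finset.sum_congr rfl fun i _ => Finset.sum_congr rfl fun j _ => by ring
    rw [h0, hsmulsum, inner_neg_neg, real_inner_self_eq_norm_sq]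
  -- value of B4
  set W := ∑ i, w i ^ 2 with hWdef
  have hB4val : B4 = W ^ 2 := by
    rw [hB4def, hWdef, sq, Finset.sum_mul_sum]
    exact Finset.sum_congr rfl fun i _ => Finset.sum_congr rfl fun j _ => by ring
  have hcardle : S.card ≤ n := by
    have := S.card_le_univ
    simpa [Fintype.card_fin] using this
  have hcardcompl : ((Sᶜ.card : ℕ) : ℝ) = (n : ℝ) - s := by
    rw [Finset.card_compl, Fintype.card_fin, Nat.cast_sub hcardle, hsdef]
  have hWval : W = s * ((n : ℝ) - s) / n := by
    rw [hWdef, ← Finset.sum_add_sum_compl S]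
    have h1 : ∀ i ∈ S, w i ^ 2 = (((n : ℝ) - s) / n) ^ 2 := fun i hi => by
      rw [hwdef]; simp [hi]
    have h2 : ∀ i ∈ Sᶜ, w i ^ 2 = (s / n) ^ 2 := fun i hi => by
      rw [hwdef]; simp [Finset.mem_compl.1 hi]
    rw [Finset.sum_congr rfl h1, Finset.sum_congr rfl h2, Finset.sum_const, Finset.sum_const,
      nsmul_eq_mul, nsmul_eq_mul, hcardcompl, ← hsdef]
    field_simp
    ring
  have hWpos : 0 < W := by
    rw [hWval]
    exact div_pos (mul_pos hs0 (by linarith)) hn0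
  -- trace identities
  set M : Matrix (Fin n) (Fin p) ℝ := Matrix.of fun i j => x i j with hMdef
  have hAM : A = (n : ℝ)⁻¹ • (Mᵀ * M) := by
    ext j k
    rw [hAdef]
    simp [hMdef, Matrix.mul_apply]
  have hGram : ∀ i l, (M * Mᵀ) i l = (inner ℝ (x i) (x l) : ℝ) := by
    intro i l
    simp [hMdef, Matrix.mul_apply, PiLp.inner_apply, RCLike.inner_apply, conj_trivial]
    exact Finset.sum_congr rfl fun j _ => mul_comm _ _
  have htr1 : A.trace = (n : ℝ)⁻¹ * ∑ i, ‖x i‖ ^ 2 := by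
    rw [hAM, trace_smul, trace_mul_comm]
    have hdiag : ∀ i, (M * Mᵀ) i i = ‖x i‖ ^ 2 := fun i => by
      rw [hGram, real_inner_self_eq_norm_sq]
    simp [Matrix.trace, Matrix.diag, hdiag, smul_eq_mul]
  have htr2 : (A * A).trace = (n : ℝ)⁻¹ * (n : ℝ)⁻¹ * A0 := by
    rw [hAM, smul_mul_smul_comm, trace_smul]
    have hsw : ((Mᵀ * M) * (Mᵀ * M)).trace = ((M * Mᵀ) * (M * Mᵀ)).trace := by
      calc ((Mᵀ * M) * (Mᵀ * M)).trace = (Mᵀ * (M * (Mᵀ * M))).trace := by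
            rw [Matrix.mul_assoc]
        _ = ((M * (Mᵀ * M)) * Mᵀ).trace := trace_mul_comm _ _
        _ = ((M * Mᵀ) * (M * Mᵀ)).trace := by
            rw [← Matrix.mul_assoc, Matrix.mul_assoc (M * Mᵀ)]
    rw [hsw]
    have hdiag : ∀ i, ((M * Mᵀ) * (M * Mᵀ)) i i = ∑ l, (inner ℝ (x i) (x l) : ℝ) ^ 2 := by
      intro i
      rw [Matrix.mul_apply]
      refine Finset.sum_congr rfl fun l _ => ?_
      rw [hGram, hGram, real_inner_comm (x l) (x i)]
      ring
    have : ((M * Mᵀ) * (M * Mᵀ)).trace = A0 := by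
      rw [hA0def]
      simp [Matrix.trace, Matrix.diag, hdiag]
    rw [this, smul_eq_mul]
  have hEsum : ∑ j, hA.eigenvalues j = (n : ℝ)⁻¹ * ∑ i, ‖x i‖ ^ 2 := by
    rw [← herm_trace_eq A hA, htr1]
  have hEsq : ∑ j, hA.eigenvalues j ^ 2 = (n : ℝ)⁻¹ * (n : ℝ)⁻¹ * A0 := by
    rw [← herm_trace_sq_eq A hA, htr2]
  have hTpos : 0 < (n : ℝ)⁻¹ * ∑ i, ‖x i‖ ^ 2 := by
    obtain ⟨i0, hi0⟩ := hX
    have h1 : 0 < ∑ i, ‖x i‖ ^ 2 :=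
      Finset.sum_pos' (fun i _ => by positivity)
        ⟨i0, Finset.mem_univ _, pow_pos (norm_pos_iff.mpr hi0) 2⟩
    exact mul_pos (inv_pos.mpr hn0) h1
  clear_value A0 A1 A2 B1 B2 B3 B4 W z
  -- the limit
  have hinvt : Filter.Tendsto (fun c : ℝ => c⁻¹) Filter.atTop (nhds 0) :=
    tendsto_inv_atTop_zero
  have hnum : Filter.Tendsto (fun c : ℝ => A0 * c⁻¹ ^ 2 + A1 * c⁻¹ + A2)
      Filter.atTop (nhds A2) := by
    have h := ((tendsto_const_nhds (x := A0)).mul (hinvt.pow 2)).add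
      ((tendsto_const_nhds (x := A1)).mul hinvt) |>.add (tendsto_const_nhds (x := A2))
    simpa using h
  have hden : Filter.Tendsto
      (fun c : ℝ => A0 * (A0 * c⁻¹ ^ 4 + B1 * c⁻¹ ^ 3 + B2 * c⁻¹ ^ 2 + B3 * c⁻¹ + B4))
      Filter.atTop (nhds (A0 * B4)) := by
    have h := ((((tendsto_const_nhds (x := A0)).mul (hinvt.pow 4)).add
      ((tendsto_const_nhds (x := B1)).mul (hinvt.pow 3))).add
      ((tendsto_const_nhds (x := B2)).mul (hinvt.pow 2))).add
      ((tendsto_const_nhds (x := B3)).mul hinvt) |>.add (tendsto_const_nhds (x := B4))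
    have h2 := (tendsto_const_nhds (x := A0)).mul h
    simpa using h2
  have hB4pos : 0 < B4 := by rw [hB4val]; positivity
  have hsqrtne : Real.sqrt (A0 * B4) ≠ 0 :=
    ne_of_gt (Real.sqrt_pos.2 (mul_pos hA0pos hB4pos))
  have hF : Filter.Tendsto
      (fun c : ℝ => (A0 * c⁻¹ ^ 2 + A1 * c⁻¹ + A2) /
        Real.sqrt (A0 * (A0 * c⁻¹ ^ 4 + B1 * c⁻¹ ^ 3 + B2 * c⁻¹ ^ 2 + B3 * c⁻¹ + B4)))
      Filter.atTop (nhds (A2 / Real.sqrt (A0 * B4))) :=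
    hnum.div hden.sqrt hsqrtne
  have heq : (fun c : ℝ => (A0 * c⁻¹ ^ 2 + A1 * c⁻¹ + A2) /
        Real.sqrt (A0 * (A0 * c⁻¹ ^ 4 + B1 * c⁻¹ ^ 3 + B2 * c⁻¹ ^ 2 + B3 * c⁻¹ + B4)))
      =ᶠ[Filter.atTop]
      (fun c : ℝ =>
        (∑ i, ∑ j, (inner ℝ (x i) (x j) : ℝ) * (inner ℝ (y c i) (y c j) : ℝ)) /
          Real.sqrt (A0 * (∑ i, ∑ j, (inner ℝ (y c i) (y c j) : ℝ) ^ 2))) := by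
    filter_upwards [Filter.eventually_gt_atTop (0 : ℝ)] with c hc
    rw [hN c, hP c]
    have hc2 : (0 : ℝ) < c ^ 2 := by positivity
    have hnum2 : A0 + A1 * c + A2 * c ^ 2 = (A0 * c⁻¹ ^ 2 + A1 * c⁻¹ + A2) * c ^ 2 := by
      field_simp
    have h4 : A0 * (A0 + B1 * c + B2 * c ^ 2 + B3 * c ^ 3 + B4 * c ^ 4)
        = (A0 * (A0 * c⁻¹ ^ 4 + B1 * c⁻¹ ^ 3 + B2 * c⁻¹ ^ 2 + B3 * c⁻¹ + B4)) * (c ^ 2) ^ 2 := by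
      field_simp
    rw [hnum2, h4, Real.sqrt_mul' _ (sq_nonneg (c ^ 2)), Real.sqrt_sq hc2.le,
      mul_div_mul_right _ _ (ne_of_gt hc2)]
  have hmain := hF.congr' heq
  -- identify the limit value
  have hval : ((s / n) / (1 - s / n)) * ‖s⁻¹ • z‖ ^ 2 / ((n : ℝ)⁻¹ * ∑ i, ‖x i‖ ^ 2) *
      Real.sqrt ((∑ j, hA.eigenvalues j) ^ 2 / (∑ j, hA.eigenvalues j ^ 2))
      = A2 / Real.sqrt (A0 * B4) := by
    set T := (n : ℝ)⁻¹ * ∑ i, ‖x i‖ ^ 2 with hTdef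
    have hsq1 : T ^ 2 / ((n : ℝ)⁻¹ * (n : ℝ)⁻¹ * A0) = (T * n / Real.sqrt A0) ^ 2 := by
      rw [div_pow, Real.sq_sqrt hA0pos.le]
      field_simp
    have hTn : (0:ℝ) ≤ T * n / Real.sqrt A0 :=
      le_of_lt (div_pos (mul_pos hTpos hn0) (Real.sqrt_pos.2 hA0pos))
    rw [hEsum, hEsq, hsq1, Real.sqrt_sq hTn]
    rw [hA2val, hB4val, Real.sqrt_mul hA0pos.le, Real.sqrt_sq hWpos.le]
    rw [norm_smul, Real.norm_eq_abs, abs_of_pos (inv_pos.2 hs0), mul_pow, hWval]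
    have hsA0 : Real.sqrt A0 ≠ 0 := ne_of_gt (Real.sqrt_pos.2 hA0pos)
    have h1sn : 1 - s / n ≠ 0 := by
      have : s / n < 1 := (div_lt_one hn0).2 hsn
      linarith
    have hns : (n : ℝ) - s ≠ 0 := by linarith
    field_simp
  rw [hval]
  exact hmain
end

section
/- (Outlier corollary) In the setting of the main theorem with S = {x̂} a single point (ρ = 1/n), lim_{c→∞} CKA_lin(X, Y_c) = (1/(n−1)) · ‖x̂‖² / ((1/n)Σᵢ‖xᵢ‖²) · √PR(X). In particular the limit is at most (n/(n−1)) · √p · ‖x̂‖² / Σᵢ‖xᵢ‖², which tends to 0 as n → ∞ if ‖x̂‖²/average squared norm and PR(X) stay bounded. -/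
/-!
Write the recentred configuration as `Y_c = X + c • w` with `w i = a i • v`, where
`a = 𝟙/n - e_{i₀}`. Linear CKA is invariant under rescaling its second argument, so
`CKA(X, Y_c) = CKA(X, Y_c / c)`, and `Y_c / c → w`; by continuity the limit is `CKA(X, w)`.
For a rank-one configuration `CKA(X, w) = ‖∑ aᵢ xᵢ‖² / (‖XXᵀ‖_F ‖a‖²)`, and centring gives
`∑ aᵢ xᵢ = -x̂`, `‖a‖² = (n - 1)/n`. On the spectral side `tr A = ∑ ‖xᵢ‖² / n` and
`tr A² = ‖XXᵀ‖_F² / n²`, so `√PR(X) = ∑ ‖xᵢ‖² / ‖XXᵀ‖_F`; the bound is `PR(X) ≤ p`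
(Cauchy–Schwarz on the eigenvalues).
-/

open Finset Matrix

open Filter Topology
open scoped RealInnerProductSpace

namespace Matrix.IsHermitian

variable {𝕜 n : Type*} [RCLike 𝕜] [Fintype n] [DecidableEq n] {A : Matrix n n 𝕜}

theorem trace_mul_self_eq_sum_eigenvalues_sq (hA : A.IsHermitian) :
    (A * A).trace = ∑ i, (hA.eigenvalues i : 𝕜) ^ 2 := by
  conv_lhs => rw [hA.spectral_theorem, ← map_mul, diagonal_mul_diagonal,
    Unitary.conjStarAlgAut_apply, trace_mul_cycle, Unitary.coe_star_mul_self, one_mul]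
  simp [trace_diagonal, sq]

end Matrix.IsHermitian

section Gram

variable {ι E : Type*} [Fintype ι] [NormedAddCommGroup E] [InnerProductSpace ℝ E]

noncomputable def gramNormSq (x : ι → E) : ℝ := ∑ i, ∑ j, ⟪x i, x j⟫ ^ 2

/-- Linear CKA with the points as rows: `⟨XXᵀ, YYᵀ⟩_F / (‖XXᵀ‖_F ‖YYᵀ‖_F)`. -/
noncomputable def linearCKA (x y : ι → E) : ℝ :=
  (∑ i, ∑ j, ⟪x i, x j⟫ * ⟪y i, y j⟫) / √(gramNormSq x * gramNormSq y)

theorem gramNormSq_nonneg (x : ι → E) : 0 ≤ gramNormSq x :=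
  sum_nonneg fun _ _ => sum_nonneg fun _ _ => sq_nonneg _

theorem gramNormSq_smul (c : ℝ) (y : ι → E) :
    gramNormSq (c • y) = (c ^ 2) ^ 2 * gramNormSq y := by
  simp only [gramNormSq, Pi.smul_apply, real_inner_smul_left, real_inner_smul_right, mul_sum]
  exact sum_congr rfl fun _ _ => sum_congr rfl fun _ _ => by ring

theorem linearCKA_smul_right (x y : ι → E) {c : ℝ} (hc : c ≠ 0) :
    linearCKA x (c • y) = linearCKA x y := by
  have hnum : ∑ i, ∑ j, ⟪x i, x j⟫ * ⟪(c • y) i, (c • y) j⟫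
      = c ^ 2 * ∑ i, ∑ j, ⟪x i, x j⟫ * ⟪y i, y j⟫ := by
    simp only [Pi.smul_apply, real_inner_smul_left, real_inner_smul_right, mul_sum]
    exact sum_congr rfl fun _ _ => sum_congr rfl fun _ _ => by ring
  have hden :
      √(gramNormSq x * gramNormSq (c • y)) = c ^ 2 * √(gramNormSq x * gramNormSq y) := by
    rw [gramNormSq_smul, mul_left_comm, Real.sqrt_mul (by positivity),
      Real.sqrt_sq (by positivity)]
  rw [linearCKA, hnum, hden, mul_div_mul_left _ _ (pow_ne_zero 2 hc), linearCKA]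

theorem continuousAt_linearCKA_right {x y : ι → E} (hx : gramNormSq x ≠ 0)
    (hy : gramNormSq y ≠ 0) : ContinuousAt (linearCKA x) y := by
  have hpos : 0 < gramNormSq x * gramNormSq y :=
    mul_pos ((gramNormSq_nonneg x).lt_of_ne' hx) ((gramNormSq_nonneg y).lt_of_ne' hy)
  unfold linearCKA gramNormSq
  exact ContinuousAt.div (by fun_prop) (by fun_prop) (Real.sqrt_pos.mpr hpos).ne'

theorem tendsto_inv_smul_add_smul {F : Type*} [NormedAddCommGroup F] [NormedSpace ℝ F]
    (x w : F) :
    Tendsto (fun c : ℝ => c⁻¹ • (x + c • w)) atTop (𝓝 w) := by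
  have h : Tendsto (fun c : ℝ => c⁻¹ • x + w) atTop (𝓝 ((0 : ℝ) • x + w)) :=
    (tendsto_inv_atTop_zero.smul_const x).add_const w
  rw [zero_smul, zero_add] at h
  refine h.congr' ?_
  filter_upwards [eventually_ne_atTop 0] with c hc
  rw [smul_add, inv_smul_smul₀ hc]

theorem tendsto_linearCKA_add_smul {x w : ι → E} (y : ι → E) (hx : gramNormSq x ≠ 0)
    (hw : gramNormSq w ≠ 0) :
    Tendsto (fun c : ℝ => linearCKA x (y + c • w)) atTop (𝓝 (linearCKA x w)) := by
  refine ((continuousAt_linearCKA_right hx hw).tendsto.comp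
    (tendsto_inv_smul_add_smul y w)).congr' ?_
  filter_upwards [eventually_ne_atTop 0] with c hc
  exact linearCKA_smul_right x _ (inv_ne_zero hc)

theorem norm_sum_smul_sq (x : ι → E) (a : ι → ℝ) :
    ‖∑ i, a i • x i‖ ^ 2 = ∑ i, ∑ j, ⟪x i, x j⟫ * (a i * a j) := by
  rw [← real_inner_self_eq_norm_sq, sum_inner]
  simp only [inner_sum, real_inner_smul_left, real_inner_smul_right]
  exact sum_congr rfl fun _ _ => sum_congr rfl fun _ _ => by ring

theorem inner_smul_smul_self (v : E) (a b : ℝ) : ⟪a • v, b • v⟫ = a * b * ‖v‖ ^ 2 := by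
  rw [real_inner_smul_left, real_inner_smul_right, real_inner_self_eq_norm_sq, mul_assoc]

theorem gramNormSq_smul_const (a : ι → ℝ) (v : E) :
    gramNormSq (fun i => a i • v) = (‖v‖ ^ 2 * ∑ i, a i ^ 2) ^ 2 := by
  simp only [gramNormSq, inner_smul_smul_self]
  rw [mul_pow, sq (∑ i, _), sum_mul_sum, mul_sum]
  simp only [mul_sum]
  exact sum_congr rfl fun _ _ => sum_congr rfl fun _ _ => by ring

theorem linearCKA_smul_const_right (x : ι → E) (a : ι → ℝ) {v : E} (hv : v ≠ 0) :
    linearCKA x (fun i => a i • v) =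
      ‖∑ i, a i • x i‖ ^ 2 / (√(gramNormSq x) * ∑ i, a i ^ 2) := by
  have hv2 : ‖v‖ ^ 2 ≠ 0 := pow_ne_zero 2 (norm_ne_zero_iff.mpr hv)
  have hnum :
      ∑ i, ∑ j, ⟪x i, x j⟫ * ⟪a i • v, a j • v⟫ = ‖v‖ ^ 2 * ‖∑ i, a i • x i‖ ^ 2 := by
    simp only [inner_smul_smul_self, norm_sum_smul_sq, mul_sum]
    exact sum_congr rfl fun _ _ => sum_congr rfl fun _ _ => by ring
  rw [linearCKA, hnum, gramNormSq_smul_const, Real.sqrt_mul (gramNormSq_nonneg x),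
    Real.sqrt_sq (by positivity), mul_left_comm, mul_div_mul_left _ _ hv2]

end Gram

section Covariance

variable {ι κ : Type*} [Fintype κ]

def dataMatrix (x : ι → EuclideanSpace ℝ κ) : Matrix ι κ ℝ := of fun i j => x i j

theorem dataMatrix_mul_transpose (x : ι → EuclideanSpace ℝ κ) :
    dataMatrix x * (dataMatrix x)ᵀ = gram ℝ x := by
  ext i i'
  simp [dataMatrix, mul_apply, gram_apply, PiLp.inner_apply, mul_comm]

theorem trace_transpose_mul_dataMatrix [Fintype ι] (x : ι → EuclideanSpace ℝ κ) :
    ((dataMatrix x)ᵀ * dataMatrix x).trace = ∑ i, ‖x i‖ ^ 2 := by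
  rw [trace_mul_comm, dataMatrix_mul_transpose]
  simp [trace, gram_apply]

theorem trace_sq_transpose_mul_dataMatrix [Fintype ι] (x : ι → EuclideanSpace ℝ κ) :
    ((dataMatrix x)ᵀ * dataMatrix x * ((dataMatrix x)ᵀ * dataMatrix x)).trace = gramNormSq x := by
  rw [Matrix.mul_assoc, trace_mul_comm, Matrix.mul_assoc, Matrix.mul_assoc,
    ← Matrix.mul_assoc (dataMatrix x), dataMatrix_mul_transpose]
  simp only [trace, Matrix.diag, mul_apply, gram_apply, gramNormSq, real_inner_comm (x _) (x _),
    sq]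

theorem sqrt_sq_sum_div_sum_sq_le_sqrt_card (f : κ → ℝ) :
    √((∑ j, f j) ^ 2 / ∑ j, f j ^ 2) ≤ √(Fintype.card κ) := by
  refine Real.sqrt_le_sqrt (div_le_of_le_mul₀ (by positivity) (by positivity) ?_)
  simpa using sq_sum_le_card_mul_sum_sq (s := univ) (f := f)

theorem Matrix.IsHermitian.sqrt_sq_sum_eigenvalues_div_sum_sq_of_covariance [Fintype ι]
    [DecidableEq κ] (x : ι → EuclideanSpace ℝ κ) {s : ℝ} (hs : s ≠ 0) {A : Matrix κ κ ℝ}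
    (hAdef : ∀ j k, A j k = s * ∑ i, x i j * x i k) (hA : A.IsHermitian) :
    √((∑ j, hA.eigenvalues j) ^ 2 / ∑ j, hA.eigenvalues j ^ 2)
      = (∑ i, ‖x i‖ ^ 2) / √(gramNormSq x) := by
  have hAM : A = s • ((dataMatrix x)ᵀ * dataMatrix x) := by
    ext j k
    simp [hAdef, dataMatrix, mul_apply]
  have htr : ∑ j, hA.eigenvalues j = s * ∑ i, ‖x i‖ ^ 2 := by
    simpa [hAM, trace_transpose_mul_dataMatrix] using hA.trace_eq_sum_eigenvalues.symm
  have htr2 : ∑ j, hA.eigenvalues j ^ 2 = s ^ 2 * gramNormSq x := by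
    simpa [hAM, trace_sq_transpose_mul_dataMatrix, sq, mul_assoc] using
      hA.trace_mul_self_eq_sum_eigenvalues_sq.symm
  rw [htr, htr2, mul_pow, mul_div_mul_left _ _ (pow_ne_zero 2 hs),
    Real.sqrt_div' _ (gramNormSq_nonneg x), Real.sqrt_sq (by positivity)]

end Covariance

section OutlierWeight

variable {ι : Type*} [Fintype ι] [DecidableEq ι]

/-- Translating every point except the `i₀`-th by `c • v` and recentring moves the `i`-th point
by `(c * outlierWeight i₀ i) • v`. -/
noncomputable def outlierWeight (i₀ i : ι) : ℝ :=
  (Fintype.card ι : ℝ)⁻¹ - if i = i₀ then 1 else 0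

theorem smul_outlierWeight_smul {E : Type*} [AddCommGroup E] [Module ℝ E] (c : ℝ) (v : E)
    (i₀ i : ι) :
    c • outlierWeight i₀ i • v = if i = i₀ then -((c * ((Fintype.card ι : ℝ) - 1)) /
      Fintype.card ι) • v else (c / Fintype.card ι) • v := by
  have : (Fintype.card ι : ℝ) ≠ 0 := Nat.cast_ne_zero.2 (Fintype.card_pos_iff.2 ⟨i₀⟩).ne'
  rw [outlierWeight, smul_smul]
  split_ifs
  · congr 1
    field_simp
    ring
  · rw [sub_zero, div_eq_mul_inv]

theorem sum_outlierWeight_smul {E : Type*} [AddCommGroup E] [Module ℝ E] {x : ι → E}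
    (hx : ∑ i, x i = 0) (i₀ : ι) : ∑ i, outlierWeight i₀ i • x i = -x i₀ := by
  simp [outlierWeight, sub_smul, sum_sub_distrib, ← smul_sum, hx, ite_smul]

theorem sum_outlierWeight_sq (i₀ : ι) :
    ∑ i, outlierWeight i₀ i ^ 2 = ((Fintype.card ι : ℝ) - 1) / Fintype.card ι := by
  have : (Fintype.card ι : ℝ) ≠ 0 := Nat.cast_ne_zero.2 (Fintype.card_pos_iff.2 ⟨i₀⟩).ne'
  simp only [outlierWeight, sub_sq, inv_pow, mul_ite, mul_one, mul_zero, ite_pow, one_pow,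
    ne_eq, OfNat.ofNat_ne_zero, not_false_eq_true, zero_pow, sum_add_distrib, sum_sub_distrib,
    sum_const, card_univ, nsmul_eq_mul, sum_ite_eq', mem_univ, ↓reduceIte]
  field_simp
  ring

end OutlierWeight

theorem cka_outlier_limit_general (n p : ℕ) (hn : 2 ≤ n)
    (x : Fin n → EuclideanSpace ℝ (Fin p)) (hcent : ∑ i, x i = 0)
    (hX : ∃ i, x i ≠ 0)
    (i₀ : Fin n)
    (v : EuclideanSpace ℝ (Fin p)) (hv : ‖v‖ = 1)
    (y : ℝ → Fin n → EuclideanSpace ℝ (Fin p))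
    (hy : ∀ c i, y c i = if i = i₀ then x i - ((c * ((n : ℝ) - 1)) / n) • v
        else x i + (c / n) • v)
    (A : Matrix (Fin p) (Fin p) ℝ)
    (hAdef : ∀ j k, A j k = (n : ℝ)⁻¹ * ∑ i, x i j * x i k)
    (hA : A.IsHermitian)
    (hdenX : ∑ i, ∑ j, (inner ℝ (x i) (x j) : ℝ) ^ 2 ≠ 0) :
    Filter.Tendsto
      (fun c : ℝ =>
        (∑ i, ∑ j, (inner ℝ (x i) (x j) : ℝ) * (inner ℝ (y c i) (y c j) : ℝ)) /
          Real.sqrt ((∑ i, ∑ j, (inner ℝ (x i) (x j) : ℝ) ^ 2) *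
            (∑ i, ∑ j, (inner ℝ (y c i) (y c j) : ℝ) ^ 2)))
      Filter.atTop
      (nhds (((n : ℝ) - 1)⁻¹ * ‖x i₀‖ ^ 2 / ((n : ℝ)⁻¹ * ∑ i, ‖x i‖ ^ 2) *
        Real.sqrt ((∑ j, hA.eigenvalues j) ^ 2 / (∑ j, (hA.eigenvalues j) ^ 2)))) ∧
    ((n : ℝ) - 1)⁻¹ * ‖x i₀‖ ^ 2 / ((n : ℝ)⁻¹ * ∑ i, ‖x i‖ ^ 2) *
        Real.sqrt ((∑ j, hA.eigenvalues j) ^ 2 / (∑ j, (hA.eigenvalues j) ^ 2))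
      ≤ ((n : ℝ) / ((n : ℝ) - 1)) * Real.sqrt p * ‖x i₀‖ ^ 2 / ∑ i, ‖x i‖ ^ 2 := by
  have hn1 : (0 : ℝ) < n - 1 := sub_pos.2 (by exact_mod_cast hn)
  have hS : 0 < ∑ i, ‖x i‖ ^ 2 := by
    obtain ⟨i, hi⟩ := hX
    exact sum_pos' (fun _ _ => sq_nonneg _) ⟨i, mem_univ i, by positivity⟩
  set w : Fin n → EuclideanSpace ℝ (Fin p) := fun i => outlierWeight i₀ i • v
  have hyw : ∀ c, y c = x + c • w := fun c => funext fun i => by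
    rw [hy, Pi.add_apply, Pi.smul_apply, smul_outlierWeight_smul, Fintype.card_fin]
    split_ifs <;> simp only [sub_eq_add_neg, neg_smul]
  have hv0 : v ≠ 0 := norm_ne_zero_iff.mp (by simp [hv])
  have hsq : ∑ i, outlierWeight i₀ i ^ 2 = ((n : ℝ) - 1) / n := by
    simpa using sum_outlierWeight_sq i₀
  have hw : gramNormSq w ≠ 0 := by
    rw [gramNormSq_smul_const, hv, hsq]
    positivity
  have hlimit : linearCKA x w = ((n : ℝ) - 1)⁻¹ * ‖x i₀‖ ^ 2 / ((n : ℝ)⁻¹ * ∑ i, ‖x i‖ ^ 2) *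
      √((∑ j, hA.eigenvalues j) ^ 2 / ∑ j, hA.eigenvalues j ^ 2) := by
    rw [linearCKA_smul_const_right x _ hv0, sum_outlierWeight_smul hcent, norm_neg, hsq,
      hA.sqrt_sq_sum_eigenvalues_div_sum_sq_of_covariance x (by positivity) hAdef]
    field_simp
  refine ⟨?_, ?_⟩
  · rw [← hlimit]
    refine (tendsto_linearCKA_add_smul x hdenX hw).congr fun c => ?_
    rw [← hyw]
    rfl
  · calc _ ≤ ((n : ℝ) - 1)⁻¹ * ‖x i₀‖ ^ 2 / ((n : ℝ)⁻¹ * ∑ i, ‖x i‖ ^ 2) * √p :=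
          mul_le_mul_of_nonneg_left
            (by simpa using sqrt_sq_sum_div_sum_sq_le_sqrt_card hA.eigenvalues)
            (div_nonneg (mul_nonneg (inv_nonneg.2 hn1.le) (sq_nonneg _))
              (mul_nonneg (inv_nonneg.2 n.cast_nonneg) hS.le))
      _ = _ := by
          have := hn1.ne'
          field_simp

theorem cka_outlier_limit (n p : ℕ) (hn : 2 ≤ n)
    (x : Fin n → EuclideanSpace ℝ (Fin p)) (hcent : ∑ i, x i = 0)
    (hX : ∃ i, x i ≠ 0)
    (i₀ : Fin n)
    (v : EuclideanSpace ℝ (Fin p)) (hv : ‖v‖ = 1)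
    (y : ℝ → Fin n → EuclideanSpace ℝ (Fin p))
    (hy : ∀ c i, y c i = if i = i₀ then x i - ((c * ((n : ℝ) - 1)) / n) • v
        else x i + (c / n) • v)
    (A : Matrix (Fin p) (Fin p) ℝ)
    (hAdef : ∀ j k, A j k = (n : ℝ)⁻¹ * ∑ i, x i j * x i k)
    (hA : A.IsHermitian)
    (hdenX : ∑ i, ∑ j, (inner ℝ (x i) (x j) : ℝ) ^ 2 ≠ 0)
    (hdenY : ∀ᶠ c in Filter.atTop, ∑ i, ∑ j, (inner ℝ (y c i) (y c j) : ℝ) ^ 2 ≠ 0) :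
    Filter.Tendsto
      (fun c : ℝ =>
        (∑ i, ∑ j, (inner ℝ (x i) (x j) : ℝ) * (inner ℝ (y c i) (y c j) : ℝ)) /
          Real.sqrt ((∑ i, ∑ j, (inner ℝ (x i) (x j) : ℝ) ^ 2) *
            (∑ i, ∑ j, (inner ℝ (y c i) (y c j) : ℝ) ^ 2)))
      Filter.atTop
      (nhds (((n : ℝ) - 1)⁻¹ * ‖x i₀‖ ^ 2 / ((n : ℝ)⁻¹ * ∑ i, ‖x i‖ ^ 2) *
        Real.sqrt ((∑ j, hA.eigenvalues j) ^ 2 / (∑ j, (hA.eigenvalues j) ^ 2)))) ∧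
    ((n : ℝ) - 1)⁻¹ * ‖x i₀‖ ^ 2 / ((n : ℝ)⁻¹ * ∑ i, ‖x i‖ ^ 2) *
        Real.sqrt ((∑ j, hA.eigenvalues j) ^ 2 / (∑ j, (hA.eigenvalues j) ^ 2))
      ≤ ((n : ℝ) / ((n : ℝ) - 1)) * Real.sqrt p * ‖x i₀‖ ^ 2 / ∑ i, ‖x i‖ ^ 2 :=
  cka_outlier_limit_general n p hn x hcent hX i₀ v hv y hy A hAdef hA hdenX
end
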